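/- Let G be the graph obtained by taking two disjoint butterflies with heads u_1 and u_2, and joining u_1 to u_2 by an internally disjoint induced path of odd length with no other edges between the two butterflies or from the path's interior to the butterflies. Then G has no strong stable set. -/

import Mathlib

open SimpleGraph

section Defs

variable {V : Type*}

/-- A stable (independent) set of a graph. -/
def IsStable (G : SimpleGraph V) (S : Set V) : Prop :=
  ∀ ⦃u v : V⦄, u ∈ S → v ∈ S → ¬ G.Adj u v

/-- `C` is a maximal clique of the induced subgraph `G[W]`. -/
def IsMaxCliqueOn (G : SimpleGraph V) (W C : Set V) : Prop :=
  C ⊆ W ∧ G.IsClique C ∧ ∀ D : Set V, D ⊆ W → G.IsClique D → C ⊆ D → D = C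

/-- `C` is a maximal clique of `G`. -/
def IsMaxClique (G : SimpleGraph V) (C : Set V) : Prop :=
  G.IsClique C ∧ ∀ D : Set V, G.IsClique D → C ⊆ D → D = C

/-- `S` is a strong stable set of the induced subgraph `G[W]`. -/
def StrongStableOn (G : SimpleGraph V) (W S : Set V) : Prop :=
  S ⊆ W ∧ IsStable G S ∧ ∀ C : Set V, IsMaxCliqueOn G W C → C.Nonempty → (S ∩ C).Nonempty

/-- `S` is a strong stable set of `G`. -/
def StrongStable (G : SimpleGraph V) (S : Set V) : Prop :=
  IsStable G S ∧ ∀ C : Set V, IsMaxClique G C → C.Nonempty → (S ∩ C).Nonempty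

/-- The induced subgraph `G[W]` is strongly perfect. -/
def StronglyPerfectOn (G : SimpleGraph V) (W : Set V) : Prop :=
  ∀ U : Set V, U ⊆ W → ∃ S : Set V, StrongStableOn G U S

/-- `G` is strongly perfect: every induced subgraph has a strong stable set. -/
def StronglyPerfect (G : SimpleGraph V) : Prop :=
  ∀ U : Set V, ∃ S : Set V, StrongStableOn G U S

/-- `G` is minimal non-strongly-perfect. -/
def MinimalNSP (G : SimpleGraph V) : Prop :=
  ¬ StronglyPerfect G ∧ ∀ W : Set V, W ≠ Set.univ → StronglyPerfectOn G W

end Defs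

/-- Vertices of a butterfly with path-lengths `α = |P₁|`, `β = |P₂|`, `γ = |P₃|`:
`none` is the head `v`, and `some i` is the `i`-th vertex of the induced path
`a_1-…-a_k(=b_1)-…-b_ℓ(=c_1)-…-c_m` of total length `α+β+γ`. -/
abbrev ButterflyV (a b c : ℕ) := Option (Fin (a + b + c + 1))

/-- The butterfly: the head `v` is complete to `P₂ ∪ {a_1, c_m}`, i.e. to the path
vertices with index `0`, `α+β+γ`, or in `[α, α+β]`, and no other edges. -/
def butterflyRel (a b c : ℕ) : ButterflyV a b c → ButterflyV a b c → Prop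
  | some i, some j => (j : ℕ) = (i : ℕ) + 1
  | none, some i => (i : ℕ) = 0 ∨ (i : ℕ) = a + b + c ∨ (a ≤ (i : ℕ) ∧ (i : ℕ) ≤ a + b)
  | _, _ => False

def butterfly (a b c : ℕ) : SimpleGraph (ButterflyV a b c) :=
  SimpleGraph.fromRel (butterflyRel a b c)

/-- Join two graphs (given by relations `ra`, `rb`) by an induced path
`a0-r_1-…-r_n-b0` of length `n+1` from the vertex `a0` of the first graph to the
vertex `b0` of the second graph, with no other edges between the parts. -/
def joinRel {A B : Type*} (ra : A → A → Prop) (rb : B → B → Prop) (a0 : A) (b0 : B)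
    (n : ℕ) : (A ⊕ (Fin n ⊕ B)) → (A ⊕ (Fin n ⊕ B)) → Prop
  | Sum.inl x, Sum.inl y => ra x y
  | Sum.inr (Sum.inr x), Sum.inr (Sum.inr y) => rb x y
  | Sum.inr (Sum.inl i), Sum.inr (Sum.inl j) => (j : ℕ) = (i : ℕ) + 1
  | Sum.inl x, Sum.inr (Sum.inl i) => x = a0 ∧ (i : ℕ) = 0
  | Sum.inr (Sum.inl i), Sum.inr (Sum.inr y) => (i : ℕ) = n - 1 ∧ y = b0
  | Sum.inl x, Sum.inr (Sum.inr y) => n = 0 ∧ x = a0 ∧ y = b0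
  | _, _ => False

/-- Two disjoint butterflies whose heads are joined by an induced path
`u_1-r_1-…-r_n-u_2` of length `n+1`; the path is odd, i.e. `n` is even. -/
def butterflyJoin (a₁ b₁ c₁ a₂ b₂ c₂ n : ℕ) :
    SimpleGraph (ButterflyV a₁ b₁ c₁ ⊕ (Fin n ⊕ ButterflyV a₂ b₂ c₂)) :=
  SimpleGraph.fromRel
    (joinRel (butterflyRel a₁ b₁ c₁) (butterflyRel a₂ b₂ c₂) none none n)

/-! If an edge `xy` has no common neighbour in a strong stable set `S`, then a maximal clique
through `xy` can meet `S` only in `x` or `y`; so along a path whose edges have no common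
neighbour in `S`, the set `S` contains exactly every second vertex, and a path with both ends
in `S` has even length. In a butterfly whose head `v` is not in `S`, the edges `v a_1` and
`v c_m` lie in no triangle, so `a_1, c_m ∈ S`, while every edge of the odd path
`a_1 - … - c_m` has `v` as its only common neighbour: a contradiction. Hence both heads lie
in `S`, and the odd path joining them, whose edges lie in no triangle, gives the same
contradiction. -/

namespace SimpleGraph

variable {V : Type*} {G : SimpleGraph V} {S : Set V}

theorem IsClique.exists_isMaxClique_superset {s : Set V} (hs : G.IsClique s) :
    ∃ C, s ⊆ C ∧ IsMaxClique G C := by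
  obtain ⟨C, hsC, hC⟩ := zorn_subset_nonempty {t | G.IsClique t}
    (fun c hc hchain _ => ⟨⋃₀ c, (isClique_sUnion hchain.directedOn).2 hc,
      fun _ => Set.subset_sUnion_of_mem⟩) s hs
  exact ⟨C, hsC, hC.prop, fun D hD hCD => (hC.eq_of_subset hD hCD).symm⟩

end SimpleGraph

namespace StrongStable

variable {V : Type*} {G : SimpleGraph V} {S : Set V}

theorem mem_or_mem_of_adj (hS : StrongStable G S) {x y : V} (hxy : G.Adj x y)
    (hcommon : ∀ z, G.Adj x z → G.Adj y z → z ∉ S) : x ∈ S ∨ y ∈ S := by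
  -- a maximal clique through `xy` lies in `{x, y}` and the common neighbours of `x` and `y`
  obtain ⟨C, hxyC, hC⟩ := (G.isClique_pair.2 fun _ => hxy).exists_isMaxClique_superset
  have hx : x ∈ C := hxyC (by simp)
  have hy : y ∈ C := hxyC (by simp)
  obtain ⟨z, hzS, hzC⟩ := hS.2 C hC ⟨x, hx⟩
  by_cases hzx : z = x
  · exact .inl (hzx ▸ hzS)
  by_cases hzy : z = y
  · exact .inr (hzy ▸ hzS)
  exact absurd hzS (hcommon z (hC.1 hx hzC (Ne.symm hzx)) (hC.1 hy hzC (Ne.symm hzy)))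

theorem mem_path_iff_even (hS : StrongStable G S) {f : ℕ → V} {L : ℕ}
    (hadj : ∀ i < L, G.Adj (f i) (f (i + 1)))
    (hcommon : ∀ i < L, ∀ z, G.Adj (f i) z → G.Adj (f (i + 1)) z → z ∉ S)
    (h0 : f 0 ∈ S) : ∀ i ≤ L, (f i ∈ S ↔ Even i) := by
  intro i hi
  induction i with
  | zero => simpa using h0
  | succ k ih =>
    have hk : k < L := hi
    rw [Nat.even_add_one, ← ih hk.le]
    refine ⟨fun hk1 hk0 => hS.1 hk0 hk1 (hadj k hk), fun hk0 => ?_⟩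
    exact (hS.mem_or_mem_of_adj (hadj k hk) (hcommon k hk)).resolve_left hk0

theorem even_of_path (hS : StrongStable G S) {f : ℕ → V} {L : ℕ}
    (hadj : ∀ i < L, G.Adj (f i) (f (i + 1)))
    (hcommon : ∀ i < L, ∀ z, G.Adj (f i) z → G.Adj (f (i + 1)) z → z ∉ S)
    (h0 : f 0 ∈ S) (hL : f L ∈ S) : Even L :=
  (hS.mem_path_iff_even hadj hcommon h0 L le_rfl).1 hL

end StrongStable

section Butterfly

variable {a b c : ℕ}

def butterflyPath (a b c i : ℕ) : Fin (a + b + c + 1) :=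
  ⟨min i (a + b + c), by omega⟩

theorem butterfly_adj_path {i : ℕ} (hi : i < a + b + c) :
    (butterfly a b c).Adj (some (butterflyPath a b c i)) (some (butterflyPath a b c (i + 1))) := by
  simp [butterfly, butterflyPath, butterflyRel]
  omega

theorem butterfly_eq_head_of_adj_path {i : ℕ} (hi : i < a + b + c) {w : ButterflyV a b c}
    (h₁ : (butterfly a b c).Adj (some (butterflyPath a b c i)) w)
    (h₂ : (butterfly a b c).Adj (some (butterflyPath a b c (i + 1))) w) : w = none := by
  rcases w with _ | ⟨k, hk⟩
  · rfl
  · simp [butterfly, butterflyPath, butterflyRel] at h₁ h₂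
    omega

theorem butterfly_head_adj_path_zero :
    (butterfly a b c).Adj none (some (butterflyPath a b c 0)) := by
  simp [butterfly, butterflyPath, butterflyRel]

theorem butterfly_head_adj_path_end :
    (butterfly a b c).Adj none (some (butterflyPath a b c (a + b + c))) := by
  simp [butterfly, butterflyPath, butterflyRel]

theorem butterfly_not_adj_head_of_adj_path_zero (ha : 2 ≤ a) {w : ButterflyV a b c}
    (h : (butterfly a b c).Adj (some (butterflyPath a b c 0)) w) :
    ¬ (butterfly a b c).Adj none w := by
  rcases w with _ | ⟨k, hk⟩
  · simp
  · simp [butterfly, butterflyPath, butterflyRel] at h ⊢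
    omega

theorem butterfly_not_adj_head_of_adj_path_end (hc : 2 ≤ c) {w : ButterflyV a b c}
    (h : (butterfly a b c).Adj (some (butterflyPath a b c (a + b + c))) w) :
    ¬ (butterfly a b c).Adj none w := by
  rcases w with _ | ⟨k, hk⟩
  · simp
  · simp [butterfly, butterflyPath, butterflyRel] at h ⊢
    omega

end Butterfly

theorem StrongStable.head_mem_of_butterfly {V : Type*} {G : SimpleGraph V} {S : Set V}
    (hS : StrongStable G S) {a b c : ℕ} (ha : 2 ≤ a) (hc : 2 ≤ c) (hodd : Odd (a + b + c))
    (e : butterfly a b c ↪g G) (hnbr : ∀ i z, G.Adj (e (some i)) z → z ∈ Set.range e) :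
    e none ∈ S := by
  by_contra hv
  have hlift : ∀ i y z, G.Adj (e (some i)) z → G.Adj (e y) z →
      ∃ w, z = e w ∧ (butterfly a b c).Adj (some i) w ∧ (butterfly a b c).Adj y w := by
    rintro i y z h₁ h₂
    obtain ⟨w, rfl⟩ := hnbr i z h₁
    exact ⟨w, rfl, e.map_adj_iff.1 h₁, e.map_adj_iff.1 h₂⟩
  have hend : ∀ j, (butterfly a b c).Adj none (some (butterflyPath a b c j)) →
      (∀ w, (butterfly a b c).Adj (some (butterflyPath a b c j)) w →
        ¬ (butterfly a b c).Adj none w) →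
      e (some (butterflyPath a b c j)) ∈ S := by
    intro j hadj hno
    refine (hS.mem_or_mem_of_adj (e.map_adj_iff.2 hadj) fun z h₁ h₂ => ?_).resolve_left hv
    obtain ⟨w, -, hw₁, hw₂⟩ := hlift _ none z h₂ h₁
    exact absurd hw₂ (hno w hw₁)
  have hfirst := hend 0 butterfly_head_adj_path_zero
    fun _ => butterfly_not_adj_head_of_adj_path_zero ha
  have hlast := hend _ butterfly_head_adj_path_end
    fun _ => butterfly_not_adj_head_of_adj_path_end hc
  refine Nat.not_even_iff_odd.2 hodd <|
    hS.even_of_path (f := fun i => e (some (butterflyPath a b c i)))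
      (fun i hi => e.map_adj_iff.2 (butterfly_adj_path hi)) (fun i hi z h₁ h₂ => ?_) hfirst hlast
  obtain ⟨w, rfl, hw₁, hw₂⟩ := hlift _ _ z h₁ h₂
  rwa [butterfly_eq_head_of_adj_path hi hw₁ hw₂]

section Join

variable {A B : Type*} {ra : A → A → Prop} {rb : B → B → Prop} {a₀ : A} {b₀ : B} {n : ℕ}

def joinLeftEmbedding : fromRel ra ↪g fromRel (joinRel ra rb a₀ b₀ n) where
  toFun := Sum.inl
  inj' := Sum.inl_injective
  map_rel_iff' := by simp [joinRel]

def joinRightEmbedding : fromRel rb ↪g fromRel (joinRel ra rb a₀ b₀ n) where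
  toFun := Sum.inr ∘ Sum.inr
  inj' := Sum.inr_injective.comp Sum.inr_injective
  map_rel_iff' := by simp [joinRel]

theorem mem_range_inl_of_joinRel_adj {x : A} (hx : x ≠ a₀) {z : A ⊕ (Fin n ⊕ B)}
    (h : (fromRel (joinRel ra rb a₀ b₀ n)).Adj (Sum.inl x) z) :
    z ∈ Set.range Sum.inl := by
  rcases z with y | k | y
  · exact ⟨y, rfl⟩
  all_goals simp [joinRel, hx] at h

theorem mem_range_inr_inr_of_joinRel_adj {y : B} (hy : y ≠ b₀) {z : A ⊕ (Fin n ⊕ B)}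
    (h : (fromRel (joinRel ra rb a₀ b₀ n)).Adj (Sum.inr (Sum.inr y)) z) :
    z ∈ Set.range (Sum.inr ∘ Sum.inr) := by
  rcases z with x | k | x
  · simp [joinRel, hy] at h
  · simp [joinRel, hy] at h
  · exact ⟨x, rfl⟩

variable (a₀ b₀ n) in
def joinPath : ℕ → A ⊕ (Fin n ⊕ B)
  | 0 => .inl a₀
  | i + 1 => if h : i < n then .inr (.inl ⟨i, h⟩) else .inr (.inr b₀)

theorem joinPath_end : joinPath a₀ b₀ n (n + 1) = .inr (.inr b₀) := by
  simp [joinPath]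

theorem joinPath_adj {i : ℕ} (hi : i ≤ n) :
    (fromRel (joinRel ra rb a₀ b₀ n)).Adj (joinPath a₀ b₀ n i) (joinPath a₀ b₀ n (i + 1)) := by
  rcases i with _ | i <;> simp only [joinPath] <;> split_ifs <;> simp [joinRel] <;> omega

theorem joinPath_not_adj_of_adj {i : ℕ} (hi : i ≤ n) {z : A ⊕ (Fin n ⊕ B)}
    (h₁ : (fromRel (joinRel ra rb a₀ b₀ n)).Adj (joinPath a₀ b₀ n i) z) :
    ¬ (fromRel (joinRel ra rb a₀ b₀ n)).Adj (joinPath a₀ b₀ n (i + 1)) z := by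
  rcases i with _ | i <;> rcases z with x | k | y <;> grind [joinPath, joinRel, fromRel_adj]

end Join

theorem two_butterflies_odd_path_no_sss (a₁ b₁ c₁ a₂ b₂ c₂ n : ℕ)
    (ha₁ : 2 ≤ a₁) (ha₁e : Even a₁) (hb₁o : Odd b₁) (hc₁ : 2 ≤ c₁) (hc₁e : Even c₁)
    (ha₂ : 2 ≤ a₂) (ha₂e : Even a₂) (hb₂o : Odd b₂) (hc₂ : 2 ≤ c₂) (hc₂e : Even c₂)
    (hne : Even n) :
    ¬ ∃ S : Set (ButterflyV a₁ b₁ c₁ ⊕ (Fin n ⊕ ButterflyV a₂ b₂ c₂)),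
      StrongStable (butterflyJoin a₁ b₁ c₁ a₂ b₂ c₂ n) S := by
  rintro ⟨S, hS⟩
  have hu₁ : joinPath none none n 0 ∈ S :=
    hS.head_mem_of_butterfly ha₁ hc₁ ((ha₁e.add_odd hb₁o).add_even hc₁e) joinLeftEmbedding
      fun _ _ => mem_range_inl_of_joinRel_adj (Option.some_ne_none _)
  have hu₂ : joinPath none none n (n + 1) ∈ S := by
    rw [joinPath_end]
    exact hS.head_mem_of_butterfly ha₂ hc₂ ((ha₂e.add_odd hb₂o).add_even hc₂e)
      joinRightEmbedding fun _ _ => mem_range_inr_inr_of_joinRel_adj (Option.some_ne_none _)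
  exact Nat.not_even_iff_odd.2 hne.add_one <|
    hS.even_of_path (f := joinPath none none n) (fun i hi => joinPath_adj (Nat.lt_succ_iff.1 hi))
      (fun i hi z h₁ h₂ => absurd h₂ (joinPath_not_adj_of_adj (Nat.lt_succ_iff.1 hi) h₁)) hu₁ hu₂
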